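/- Assume every C_i and C'_i is Clifford. Then there exists a phase φ ∈ ℝ such that F'(U⃗_σ) = e^{iφ} F(U⃗) for every sequence U⃗ = (U_1,…,U_m) of 2×2 unitary matrices if and only if there exists φ ∈ ℝ such that all of the following hold: (a) C'_{m:0} = e^{iφ} C_{m:0}; (b) for every pair (i,j) with σ(j) = i, V_i(X) = V'_j(X) and V_i(Z) = V'_j(Z); and (c) for every pair of indices r < r' with σ^{-1}(r) > σ^{-1}(r') and every P, P' ∈ 𝒫, V_r(P) V_{r'}(P') = V_{r'}(P') V_r(P). -/

import Mathlib

open Matrix Complex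

noncomputable section

namespace QEC

/-- The space of `n`-qubit operators: `2^n × 2^n` complex matrices, with the
index set realized as `Fin n → Fin 2`. -/
abbrev QMat (n : ℕ) := Matrix (Fin n → Fin 2) (Fin n → Fin 2) ℂ

/-- The Pauli `X` matrix. -/
def PX : Matrix (Fin 2) (Fin 2) ℂ := !![0, 1; 1, 0]

/-- The Pauli `Y` matrix. -/
def PY : Matrix (Fin 2) (Fin 2) ℂ := !![0, -Complex.I; Complex.I, 0]

/-- The Pauli `Z` matrix. -/
def PZ : Matrix (Fin 2) (Fin 2) ℂ := !![1, 0; 0, -1]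

/-- The four single-qubit Pauli matrices `𝒫 = {I, X, Y, Z}`, indexed by `Fin 4`. -/
def pauli : Fin 4 → Matrix (Fin 2) (Fin 2) ℂ := ![1, PX, PY, PZ]

/-- `A^{(k)} = I^{⊗(k-1)} ⊗ A ⊗ I^{⊗(n-k)}`: the single-qubit operator `A`
acting on the `k`-th qubit of an `n`-qubit system. -/
def embed {n : ℕ} (k : Fin n) (A : Matrix (Fin 2) (Fin 2) ℂ) : QMat n :=
  fun x y => A (x k) (y k) * ∏ q ∈ Finset.univ.erase k, (if x q = y q then (1 : ℂ) else 0)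

/-- The Kronecker product `P 0 ⊗ P 1 ⊗ ⋯ ⊗ P (n-1)` of `n` single-qubit operators. -/
def kron {n : ℕ} (P : Fin n → Matrix (Fin 2) (Fin 2) ℂ) : QMat n :=
  fun x y => ∏ q, P q (x q) (y q)

/-- The circuit `F(A⃗) = C_m A_m^{(k_m)} C_{m-1} ⋯ C_1 A_1^{(k_1)} C_0`
(here the layers are indexed by `Fin m`, with `i : Fin m` standing for layer `i+1`). -/
def circuit {n m : ℕ} (C : Fin (m + 1) → QMat n) (k : Fin m → Fin n)
    (A : Fin m → Matrix (Fin 2) (Fin 2) ℂ) : QMat n :=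
  ((List.ofFn fun i : Fin m => C i.succ * embed (k i) (A i)).reverse).prod * C 0

/-- The cumulative product `C_{m:i} = C_m C_{m-1} ⋯ C_i`. -/
def Ccum {n m : ℕ} (C : Fin (m + 1) → QMat n) (i : Fin (m + 1)) : QMat n :=
  (((List.ofFn C).reverse).take (m + 1 - (i : ℕ))).prod

/-- `V_i(P) = C_{m:i} P^{(k_i)} C_{m:i}^†` (with `i : Fin m` standing for layer `i+1`). -/
def Vop {n m : ℕ} (C : Fin (m + 1) → QMat n) (k : Fin m → Fin n) (i : Fin m)
    (P : Matrix (Fin 2) (Fin 2) ℂ) : QMat n :=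
  Ccum C i.succ * embed (k i) P * (Ccum C i.succ)ᴴ

/-- `W(P⃗) = V_m(P_m) V_{m-1}(P_{m-1}) ⋯ V_1(P_1)`. -/
def Wop {n m : ℕ} (C : Fin (m + 1) → QMat n) (k : Fin m → Fin n)
    (P : Fin m → Matrix (Fin 2) (Fin 2) ℂ) : QMat n :=
  ((List.ofFn fun i : Fin m => Vop C k i (P i)).reverse).prod

/-- The global phase `e^{iφ}`. -/
def phase (φ : ℝ) : ℂ := Complex.exp ((φ : ℂ) * Complex.I)

/-- A unitary `C` is Clifford when it maps every Pauli string to a signed Pauli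
string under conjugation. -/
def IsClifford {n : ℕ} (C : QMat n) : Prop :=
  ∀ Q : Fin n → Fin 4, ∃ (ε : ℂ) (Q' : Fin n → Fin 4), (ε = 1 ∨ ε = -1) ∧
    C * kron (fun q => pauli (Q q)) * Cᴴ = ε • kron (fun q => pauli (Q' q))

/-!
Write `F(U⃗) = W(U⃗) C_{m:0}` with `W(U⃗) = V_m(U_m) ⋯ V_1(U_1)`: each `V_i` is the embedding on
qubit `k_i` followed by conjugation with the unitary `C_{m:i}`, hence a unital algebra
homomorphism out of `M₂(ℂ)`. Taking every `U_i = I` gives (a), after which the identity amounts to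
`W'(U⃗_σ) = W(U⃗)`. As `X` and `Z` generate `M₂(ℂ)` as an algebra, (b) says `V'_j = V_{σ(j)}` and
(c) says that `V_r` and `V_{r'}` have commuting images for every inversion of `σ`; insertion sort
then reorders the product `W'(U⃗_σ)` into `W(U⃗)` swapping only inverted pairs. Conversely,
inputs `U⃗` with one or two non-identity (Pauli) entries extract (b) and (c).
-/

section ListProd

variable {α M : Type*} [Monoid M]

theorem _root_.List.prod_map_orderedInsert (r : α → α → Prop) [DecidableRel r] (f : α → M)
    (a : α) (l : List α) (h : ∀ b ∈ l, ¬ r a b → Commute (f a) (f b)) :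
    ((l.orderedInsert r a).map f).prod = f a * (l.map f).prod := by
  induction l with
  | nil => simp
  | cons b l ih =>
    by_cases hab : r a b
    · simp [hab]
    · simp only [List.orderedInsert_cons, hab, if_false, List.map_cons, List.prod_cons]
      rw [ih fun c hc => h c (List.mem_cons_of_mem b hc), ← mul_assoc,
        ← (h b List.mem_cons_self hab).eq, mul_assoc]

theorem _root_.List.prod_map_insertionSort (r : α → α → Prop) [DecidableRel r] (f : α → M)
    {l : List α} (h : l.Pairwise fun a b => ¬ r a b → Commute (f a) (f b)) :
    ((l.insertionSort r).map f).prod = (l.map f).prod := by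
  induction l with
  | nil => rfl
  | cons a l ih =>
    rw [List.pairwise_cons] at h
    rw [List.insertionSort_cons, List.prod_map_orderedInsert, ih h.2, List.map_cons,
      List.prod_cons]
    exact fun b hb => h.1 b ((List.mem_insertionSort r).mp hb)

theorem prod_reverse_ofFn_comp_perm {m : ℕ} (g : Fin m → M) (σ : Equiv.Perm (Fin m))
    (h : ∀ r r', r < r' → σ.symm r' < σ.symm r → Commute (g r) (g r')) :
    (List.ofFn (g ∘ σ)).reverse.prod = (List.ofFn g).reverse.prod := by
  have hsort : ((List.ofFn σ).reverse.insertionSort (· ≥ ·)) = (List.ofFn id).reverse := by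
    refine List.Perm.eq_of_pairwise' (List.pairwise_insertionSort _ _) ?_ ?_
    · simpa [List.pairwise_reverse, List.pairwise_ofFn] using fun i j (hij : i < j) => hij.le
    · exact (List.perm_insertionSort _ _).trans
        ((List.reverse_perm _).trans ((σ.ofFn_comp_perm id).trans (List.reverse_perm _).symm))
  have hcomm : (List.ofFn σ).reverse.Pairwise fun a b => ¬ a ≥ b → Commute (g a) (g b) := by
    simp only [List.pairwise_reverse, List.pairwise_ofFn, not_le]
    intro i j hij hlt
    exact h _ _ hlt (by simpa using hij)
  have key := List.prod_map_insertionSort (· ≥ ·) g hcomm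
  rw [hsort] at key
  simpa [List.map_reverse, List.map_ofFn] using key.symm

theorem prod_reverse_ofFn_succ {m : ℕ} (g : Fin (m + 1) → M) :
    (List.ofFn g).reverse.prod = (List.ofFn fun i => g i.succ).reverse.prod * g 0 := by
  simp [List.ofFn_succ]

theorem prod_reverse_ofFn_mul_eq_mul {m : ℕ} (v w : Fin m → M) (d : Fin (m + 1) → M)
    (h : ∀ i, v i * d i.castSucc = d i.succ * w i) :
    (List.ofFn v).reverse.prod * d 0 = d (Fin.last m) * (List.ofFn w).reverse.prod := by
  induction m with
  | zero => simp
  | succ m ih =>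
    have step : v 0 * d 0 = d (Fin.succ 0) * w 0 := h 0
    rw [prod_reverse_ofFn_succ, prod_reverse_ofFn_succ w, mul_assoc, step, ← mul_assoc,
      ih _ _ (fun i => d i.succ) fun i => h i.succ, mul_assoc]
    rfl

theorem prod_reverse_ofFn_eq_of_eq_one {m : ℕ} {g : Fin m → M} (a : Fin m)
    (h : ∀ t ≠ a, g t = 1) : (List.ofFn g).reverse.prod = g a := by
  induction m with
  | zero => exact a.elim0
  | succ m ih =>
    rw [prod_reverse_ofFn_succ]
    rcases Fin.eq_zero_or_eq_succ a with rfl | ⟨a, rfl⟩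
    · rw [List.prod_eq_one (by simpa using fun t => h t.succ (Fin.succ_ne_zero t)), one_mul]
    · rw [h 0 (Fin.succ_ne_zero a).symm, mul_one]
      exact ih a fun t ht => h t.succ (by simpa using ht)

theorem prod_reverse_ofFn_eq_mul_of_eq_one {m : ℕ} {g : Fin m → M} {a b : Fin m} (hab : a < b)
    (h : ∀ t, t ≠ a → t ≠ b → g t = 1) : (List.ofFn g).reverse.prod = g b * g a := by
  induction m with
  | zero => exact a.elim0
  | succ m ih =>
    obtain ⟨b, rfl⟩ := Fin.eq_succ_of_ne_zero (Fin.pos_iff_ne_zero.mp (a.zero_le.trans_lt hab))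
    rw [prod_reverse_ofFn_succ]
    rcases Fin.eq_zero_or_eq_succ a with rfl | ⟨a, rfl⟩
    · exact congrArg (· * g 0) (prod_reverse_ofFn_eq_of_eq_one b
        fun t ht => h t.succ (Fin.succ_ne_zero t) (by simpa using ht))
    · rw [h 0 (Fin.succ_ne_zero a).symm (Fin.succ_ne_zero b).symm, mul_one]
      exact ih (Fin.succ_lt_succ_iff.mp hab)
        fun t hta htb => h t.succ (by simpa using hta) (by simpa using htb)

end ListProd

theorem mulSingle_apply_mem {ι M : Type*} [DecidableEq ι] [Monoid M] {S : Submonoid M} {a : M}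
    (ha : a ∈ S) (i t : ι) : (Pi.mulSingle i a : ι → M) t ∈ S := by
  rw [Pi.mulSingle_apply]
  split_ifs
  exacts [ha, one_mem S]

theorem commute_of_adjoin_eq_top {R A B : Type*} [CommSemiring R] [Semiring A] [Semiring B]
    [Algebra R A] [Algebra R B] {s : Set A} (hs : Algebra.adjoin R s = ⊤) (f g : A →ₐ[R] B)
    (h : ∀ a ∈ s, ∀ b ∈ s, Commute (f a) (g b)) (a b : A) : Commute (f a) (g b) := by
  have of_generators (φ : A →ₐ[R] B) (y : B) (hy : ∀ x ∈ s, Commute y (φ x)) (x : A) :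
      Commute y (φ x) := by
    have hle : Algebra.adjoin R s ≤ (Subalgebra.centralizer R {y}).comap φ :=
      Algebra.adjoin_le fun x hx => by simpa [Set.mem_centralizer_iff] using (hy x hx).eq
    simpa [Subalgebra.mem_centralizer_iff, Commute, SemiconjBy]
      using hle (hs ▸ Algebra.mem_top : x ∈ _)
  exact (of_generators f (g b) (fun a ha => (of_generators g (f a) (h a ha) b).symm) a).symm

theorem kron_mul {n : ℕ} (P Q : Fin n → Matrix (Fin 2) (Fin 2) ℂ) :
    kron P * kron Q = kron (P * Q) := by
  ext x y
  simp only [kron, Matrix.mul_apply, Fintype.prod_sum, Pi.mul_apply, Finset.prod_mul_distrib]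

theorem kron_one {n : ℕ} : kron (1 : Fin n → Matrix (Fin 2) (Fin 2) ℂ) = 1 := by
  ext x y
  simp only [kron, Pi.one_apply, Matrix.one_apply, Finset.prod_boole, Finset.mem_univ,
    forall_const, funext_iff]

theorem embed_eq_kron {n : ℕ} (k : Fin n) (A : Matrix (Fin 2) (Fin 2) ℂ) :
    embed k A = kron (Function.update 1 k A) := by
  ext x y
  rw [embed, kron, ← Finset.mul_prod_erase _ _ (Finset.mem_univ k)]
  congr 1
  · simp
  · refine Finset.prod_congr rfl fun q hq => ?_
    simp [Function.update_of_ne (Finset.ne_of_mem_erase hq), Matrix.one_apply]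

def embedAlgHom {n : ℕ} (k : Fin n) : Matrix (Fin 2) (Fin 2) ℂ →ₐ[ℂ] QMat n :=
  AlgHom.ofLinearMap
    { toFun := embed k
      map_add' := fun A B => by ext; simp [embed, add_mul]
      map_smul' := fun c A => by ext; simp [embed, mul_assoc] }
    (by simp [embed_eq_kron, kron_one])
    (fun A B => by simp [embed_eq_kron, kron_mul, ← Function.update_mul])

theorem adjoin_PX_PZ : Algebra.adjoin ℂ {PX, PZ} = ⊤ := by
  refine eq_top_iff.2 fun A _ => ?_
  have hA : A = ((A 0 0 + A 1 1) / 2) • 1 + ((A 0 1 + A 1 0) / 2) • PX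
      + ((A 1 0 - A 0 1) / 2) • (PX * PZ) + ((A 0 0 - A 1 1) / 2) • PZ := by
    ext i j
    fin_cases i <;> fin_cases j <;> simp [PX, PZ] <;> ring
  have hX : PX ∈ Algebra.adjoin ℂ {PX, PZ} := Algebra.subset_adjoin (by simp)
  have hZ : PZ ∈ Algebra.adjoin ℂ {PX, PZ} := Algebra.subset_adjoin (by simp)
  rw [hA]
  refine add_mem (add_mem (add_mem ?_ ?_) ?_) ?_ <;> refine Subalgebra.smul_mem _ ?_ _
  exacts [one_mem _, hX, mul_mem hX hZ, hZ]

theorem pauli_mem_unitaryGroup (q : Fin 4) : pauli q ∈ Matrix.unitaryGroup (Fin 2) ℂ := by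
  rw [Matrix.mem_unitaryGroup_iff]
  fin_cases q <;> ext i j <;> fin_cases i <;> fin_cases j <;>
    simp [pauli, PX, PY, PZ, Matrix.mul_apply, Matrix.one_apply]

section Ccum

variable {n m : ℕ} (C : Fin (m + 1) → QMat n)

theorem Ccum_eq_drop (i : Fin (m + 1)) : Ccum C i = ((List.ofFn C).drop i).reverse.prod := by
  rw [Ccum, List.take_reverse, List.length_ofFn, Nat.sub_sub_self i.isLt.le]

theorem Ccum_castSucc (i : Fin m) : Ccum C i.castSucc = Ccum C i.succ * C i.castSucc := by
  rw [Ccum_eq_drop, Ccum_eq_drop, List.drop_eq_getElem_cons (by simp), List.reverse_cons,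
    List.prod_append, List.prod_singleton, List.getElem_ofFn]
  rfl

theorem Ccum_last : Ccum C (Fin.last m) = C (Fin.last m) := by
  rw [Ccum_eq_drop, List.drop_eq_getElem_cons (by simp), List.drop_of_length_le (by simp),
    List.reverse_singleton, List.prod_singleton, List.getElem_ofFn]

theorem Ccum_mem_unitaryGroup (hC : ∀ i, C i ∈ Matrix.unitaryGroup (Fin n → Fin 2) ℂ)
    (i : Fin (m + 1)) : Ccum C i ∈ Matrix.unitaryGroup (Fin n → Fin 2) ℂ :=
  Submonoid.list_prod_mem _ fun x hx => by
    obtain ⟨j, rfl⟩ := List.mem_ofFn.mp (List.mem_reverse.mp (List.mem_of_mem_take hx))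
    exact hC j

end Ccum

section Circuit

variable {n m : ℕ} {C C' : Fin (m + 1) → QMat n}

def vopAlgHom (hC : ∀ i, C i ∈ Matrix.unitaryGroup (Fin n → Fin 2) ℂ) (k : Fin m → Fin n)
    (i : Fin m) : Matrix (Fin 2) (Fin 2) ℂ →ₐ[ℂ] QMat n :=
  (Unitary.conjStarAlgAut ℂ (QMat n) ⟨Ccum C i.succ, Ccum_mem_unitaryGroup C hC _⟩ :
    QMat n →ₐ[ℂ] QMat n).comp (embedAlgHom (k i))

theorem vopAlgHom_apply (hC : ∀ i, C i ∈ Matrix.unitaryGroup (Fin n → Fin 2) ℂ)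
    (k : Fin m → Fin n) (i : Fin m) (A : Matrix (Fin 2) (Fin 2) ℂ) :
    vopAlgHom hC k i A = Vop C k i A := rfl

theorem Vop_eq_of_PX_PZ (hC : ∀ i, C i ∈ Matrix.unitaryGroup (Fin n → Fin 2) ℂ)
    (hC' : ∀ i, C' i ∈ Matrix.unitaryGroup (Fin n → Fin 2) ℂ) {k l : Fin m → Fin n} {i j : Fin m}
    (hX : Vop C k i PX = Vop C' l j PX) (hZ : Vop C k i PZ = Vop C' l j PZ)
    (A : Matrix (Fin 2) (Fin 2) ℂ) : Vop C k i A = Vop C' l j A := by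
  rw [← vopAlgHom_apply hC, ← vopAlgHom_apply hC']
  congr 1
  refine AlgHom.ext_of_adjoin_eq_top adjoin_PX_PZ ?_
  rintro _ (rfl | rfl)
  exacts [hX, hZ]

theorem commute_Vop_of_pauli (hC : ∀ i, C i ∈ Matrix.unitaryGroup (Fin n → Fin 2) ℂ)
    {k : Fin m → Fin n} {r r' : Fin m}
    (h : ∀ q q' : Fin 4, Vop C k r (pauli q) * Vop C k r' (pauli q') =
      Vop C k r' (pauli q') * Vop C k r (pauli q))
    (A B : Matrix (Fin 2) (Fin 2) ℂ) : Commute (Vop C k r A) (Vop C k r' B) := by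
  refine commute_of_adjoin_eq_top adjoin_PX_PZ (vopAlgHom hC k r) (vopAlgHom hC k r') ?_ A B
  rintro _ (rfl | rfl) _ (rfl | rfl)
  exacts [h 1 1, h 1 3, h 3 1, h 3 3]

theorem Vop_one (hC : ∀ i, C i ∈ Matrix.unitaryGroup (Fin n → Fin 2) ℂ) (k : Fin m → Fin n)
    (i : Fin m) : Vop C k i 1 = 1 := by
  rw [← vopAlgHom_apply hC, map_one]

theorem circuit_eq_Wop_mul_Ccum (hC : ∀ i, C i ∈ Matrix.unitaryGroup (Fin n → Fin 2) ℂ)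
    (k : Fin m → Fin n) (U : Fin m → Matrix (Fin 2) (Fin 2) ℂ) :
    circuit C k U = Wop C k U * Ccum C 0 := by
  have hW := prod_reverse_ofFn_mul_eq_mul (fun i => Vop C k i (U i))
    (fun i => embed (k i) (U i) * C i.castSucc) (Ccum C) fun i => by
      have hu := Unitary.star_mul_self_of_mem (Ccum_mem_unitaryGroup C hC i.succ)
      rw [Matrix.star_eq_conjTranspose] at hu
      simp only [Vop, Ccum_castSucc, mul_assoc]
      rw [← mul_assoc (Ccum C i.succ)ᴴ, hu, one_mul]
  have hF := prod_reverse_ofFn_mul_eq_mul (fun i => C i.succ * embed (k i) (U i))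
    (fun i => embed (k i) (U i) * C i.castSucc) C fun i => mul_assoc _ _ _
  rw [circuit, hF, Wop, hW, Ccum_last]

theorem Wop_one (hC : ∀ i, C i ∈ Matrix.unitaryGroup (Fin n → Fin 2) ℂ) (k : Fin m → Fin n) :
    Wop C k (fun _ => 1) = 1 :=
  List.prod_eq_one (by simp [Vop_one hC])

theorem Wop_eq_Vop (hC : ∀ i, C i ∈ Matrix.unitaryGroup (Fin n → Fin 2) ℂ) (k : Fin m → Fin n)
    {U : Fin m → Matrix (Fin 2) (Fin 2) ℂ} (i : Fin m) (hU : ∀ t ≠ i, U t = 1) :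
    Wop C k U = Vop C k i (U i) :=
  prod_reverse_ofFn_eq_of_eq_one i fun t ht => by rw [hU t ht, Vop_one hC]

theorem Wop_eq_Vop_mul_Vop (hC : ∀ i, C i ∈ Matrix.unitaryGroup (Fin n → Fin 2) ℂ)
    (k : Fin m → Fin n) {U : Fin m → Matrix (Fin 2) (Fin 2) ℂ} {i j : Fin m} (hij : i < j)
    (hU : ∀ t, t ≠ i → t ≠ j → U t = 1) : Wop C k U = Vop C k j (U j) * Vop C k i (U i) :=
  prod_reverse_ofFn_eq_mul_of_eq_one hij fun t hti htj => by rw [hU t hti htj, Vop_one hC]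

end Circuit

section Equivalence

variable {n m : ℕ} {C C' : Fin (m + 1) → QMat n}
  {k l : Fin m → Fin n} {σ : Equiv.Perm (Fin m)}

theorem Vop_eq_of_Wop_comp_eq (hC : ∀ i, C i ∈ Matrix.unitaryGroup (Fin n → Fin 2) ℂ)
    (hC' : ∀ i, C' i ∈ Matrix.unitaryGroup (Fin n → Fin 2) ℂ)
    (hW : ∀ U : Fin m → Matrix (Fin 2) (Fin 2) ℂ, (∀ i, U i ∈ Matrix.unitaryGroup (Fin 2) ℂ) →
      Wop C' l (fun j => U (σ j)) = Wop C k U)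
    (j : Fin m) {A : Matrix (Fin 2) (Fin 2) ℂ} (hA : A ∈ Matrix.unitaryGroup (Fin 2) ℂ) :
    Vop C k (σ j) A = Vop C' l j A := by
  have := hW _ (mulSingle_apply_mem hA (σ j))
  rwa [Wop_eq_Vop hC k (σ j) fun t ht => Pi.mulSingle_eq_of_ne ht _,
    Wop_eq_Vop hC' l j fun t ht => Pi.mulSingle_eq_of_ne (σ.injective.ne ht) _,
    Pi.mulSingle_eq_same, eq_comm] at this

theorem commute_Vop_of_Wop_comp_eq (hC : ∀ i, C i ∈ Matrix.unitaryGroup (Fin n → Fin 2) ℂ)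
    (hC' : ∀ i, C' i ∈ Matrix.unitaryGroup (Fin n → Fin 2) ℂ)
    (hW : ∀ U : Fin m → Matrix (Fin 2) (Fin 2) ℂ, (∀ i, U i ∈ Matrix.unitaryGroup (Fin 2) ℂ) →
      Wop C' l (fun j => U (σ j)) = Wop C k U)
    {r r' : Fin m} (hr : r < r') (hσ : σ.symm r' < σ.symm r) {A B : Matrix (Fin 2) (Fin 2) ℂ}
    (hA : A ∈ Matrix.unitaryGroup (Fin 2) ℂ) (hB : B ∈ Matrix.unitaryGroup (Fin 2) ℂ) :
    Commute (Vop C k r A) (Vop C k r' B) := by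
  set U : Fin m → Matrix (Fin 2) (Fin 2) ℂ := Pi.mulSingle r A * Pi.mulSingle r' B
  have hUr : U r = A := by simp [U, hr.ne]
  have hUr' : U r' = B := by simp [U, hr.ne']
  have hU (t : Fin m) (htr : t ≠ r) (htr' : t ≠ r') : U t = 1 := by simp [U, htr, htr']
  have h := hW U fun t => mul_mem (mulSingle_apply_mem hA r t) (mulSingle_apply_mem hB r' t)
  rwa [Wop_eq_Vop_mul_Vop hC k hr hU, Wop_eq_Vop_mul_Vop hC' l hσ fun t ht ht' =>
      hU _ (by rwa [Ne, ← Equiv.eq_symm_apply]) (by rwa [Ne, ← Equiv.eq_symm_apply]),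
    Equiv.apply_symm_apply, Equiv.apply_symm_apply, hUr, hUr',
    ← Vop_eq_of_Wop_comp_eq hC hC' hW _ hA, ← Vop_eq_of_Wop_comp_eq hC hC' hW _ hB,
    Equiv.apply_symm_apply, Equiv.apply_symm_apply] at h

theorem Ccum_eq_phase_smul_of_circuit_eq (hC : ∀ i, C i ∈ Matrix.unitaryGroup (Fin n → Fin 2) ℂ)
    (hC' : ∀ i, C' i ∈ Matrix.unitaryGroup (Fin n → Fin 2) ℂ) {φ : ℝ}
    (hφ : ∀ U : Fin m → Matrix (Fin 2) (Fin 2) ℂ, (∀ i, U i ∈ Matrix.unitaryGroup (Fin 2) ℂ) →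
      circuit C' l (fun i => U (σ i)) = phase φ • circuit C k U) :
    Ccum C' 0 = phase φ • Ccum C 0 := by
  simpa [circuit_eq_Wop_mul_Ccum hC, circuit_eq_Wop_mul_Ccum hC', Wop_one hC, Wop_one hC']
    using hφ (fun _ => 1) fun _ => one_mem _

theorem Wop_comp_eq_of_circuit_eq (hC : ∀ i, C i ∈ Matrix.unitaryGroup (Fin n → Fin 2) ℂ)
    (hC' : ∀ i, C' i ∈ Matrix.unitaryGroup (Fin n → Fin 2) ℂ) {φ : ℝ}
    (hφ : ∀ U : Fin m → Matrix (Fin 2) (Fin 2) ℂ, (∀ i, U i ∈ Matrix.unitaryGroup (Fin 2) ℂ) →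
      circuit C' l (fun i => U (σ i)) = phase φ • circuit C k U)
    (U : Fin m → Matrix (Fin 2) (Fin 2) ℂ) (hU : ∀ i, U i ∈ Matrix.unitaryGroup (Fin 2) ℂ) :
    Wop C' l (fun j => U (σ j)) = Wop C k U := by
  have h := hφ U hU
  rw [circuit_eq_Wop_mul_Ccum hC, circuit_eq_Wop_mul_Ccum hC',
    Ccum_eq_phase_smul_of_circuit_eq hC hC' hφ, mul_smul_comm] at h
  exact (Unitary.isUnit_coe (U := ⟨_, Ccum_mem_unitaryGroup C hC 0⟩)).mul_left_inj.mp
    (smul_right_injective _ (Complex.exp_ne_zero _) h)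

theorem Wop_comp_eq_of_Vop_eq (hV : ∀ j A, Vop C' l j A = Vop C k (σ j) A)
    (hcomm : ∀ r r' : Fin m, r < r' → σ.symm r' < σ.symm r → ∀ A B,
      Commute (Vop C k r A) (Vop C k r' B))
    (U : Fin m → Matrix (Fin 2) (Fin 2) ℂ) : Wop C' l (fun j => U (σ j)) = Wop C k U := by
  simp only [Wop, hV]
  exact prod_reverse_ofFn_comp_perm (fun i => Vop C k i (U i)) σ
    fun r r' hr hσ => hcomm r r' hr hσ _ _

end Equivalence

theorem stmt16_general (n m : ℕ)
    (C C' : Fin (m + 1) → QMat n)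
    (hC : ∀ i, C i ∈ Matrix.unitaryGroup (Fin n → Fin 2) ℂ)
    (hC' : ∀ i, C' i ∈ Matrix.unitaryGroup (Fin n → Fin 2) ℂ)
    (k l : Fin m → Fin n) (σ : Equiv.Perm (Fin m)) :
    (∃ φ : ℝ, ∀ U : Fin m → Matrix (Fin 2) (Fin 2) ℂ,
        (∀ i, U i ∈ Matrix.unitaryGroup (Fin 2) ℂ) →
        circuit C' l (fun i => U (σ i)) = phase φ • circuit C k U) ↔
    (∃ φ : ℝ,
      Ccum C' 0 = phase φ • Ccum C 0 ∧
      (∀ i j : Fin m, σ j = i →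
        Vop C k i PX = Vop C' l j PX ∧ Vop C k i PZ = Vop C' l j PZ) ∧
      (∀ r r' : Fin m, r < r' → σ.symm r' < σ.symm r → ∀ q q' : Fin 4,
        Vop C k r (pauli q) * Vop C k r' (pauli q') =
          Vop C k r' (pauli q') * Vop C k r (pauli q))) := by
  constructor
  · rintro ⟨φ, hφ⟩
    have hW := Wop_comp_eq_of_circuit_eq hC hC' hφ
    refine ⟨φ, Ccum_eq_phase_smul_of_circuit_eq hC hC' hφ, ?_, ?_⟩
    · rintro _ j rfl
      exact ⟨Vop_eq_of_Wop_comp_eq hC hC' hW j (pauli_mem_unitaryGroup 1),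
        Vop_eq_of_Wop_comp_eq hC hC' hW j (pauli_mem_unitaryGroup 3)⟩
    · exact fun r r' hr hσ q q' => commute_Vop_of_Wop_comp_eq hC hC' hW hr hσ
        (pauli_mem_unitaryGroup q) (pauli_mem_unitaryGroup q')
  · rintro ⟨φ, ha, hb, hc⟩
    have hV (j : Fin m) (A : Matrix (Fin 2) (Fin 2) ℂ) : Vop C' l j A = Vop C k (σ j) A :=
      (Vop_eq_of_PX_PZ hC hC' (hb _ j rfl).1 (hb _ j rfl).2 A).symm
    refine ⟨φ, fun U _ => ?_⟩
    rw [circuit_eq_Wop_mul_Ccum hC, circuit_eq_Wop_mul_Ccum hC', ha, mul_smul_comm,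
      Wop_comp_eq_of_Vop_eq hV fun r r' hr hσ => commute_Vop_of_pauli hC (hc r r' hr hσ)]

/-- Assuming all layers are Clifford, there exists a phase `φ` with
`F'(U⃗_σ) = e^{iφ} F(U⃗)` for every sequence of 2×2 unitaries iff there exists `φ` with
(a) `C'_{m:0} = e^{iφ} C_{m:0}`; (b) `V_i(X) = V'_j(X)` and `V_i(Z) = V'_j(Z)` whenever
`σ(j) = i`; and (c) `V_r(P)` and `V_{r'}(P')` commute for every inversion pair
`r < r'`, `σ⁻¹(r) > σ⁻¹(r')`, and all `P, P' ∈ 𝒫`. -/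
theorem stmt16 (n m : ℕ) (hn : 1 ≤ n) (hm : 1 ≤ m)
    (C C' : Fin (m + 1) → QMat n)
    (hC : ∀ i, C i ∈ Matrix.unitaryGroup (Fin n → Fin 2) ℂ)
    (hC' : ∀ i, C' i ∈ Matrix.unitaryGroup (Fin n → Fin 2) ℂ)
    (hCc : ∀ i, IsClifford (C i)) (hCc' : ∀ i, IsClifford (C' i))
    (k l : Fin m → Fin n) (σ : Equiv.Perm (Fin m)) :
    (∃ φ : ℝ, ∀ U : Fin m → Matrix (Fin 2) (Fin 2) ℂ,
        (∀ i, U i ∈ Matrix.unitaryGroup (Fin 2) ℂ) →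
        circuit C' l (fun i => U (σ i)) = phase φ • circuit C k U) ↔
    (∃ φ : ℝ,
      Ccum C' 0 = phase φ • Ccum C 0 ∧
      (∀ i j : Fin m, σ j = i →
        Vop C k i PX = Vop C' l j PX ∧ Vop C k i PZ = Vop C' l j PZ) ∧
      (∀ r r' : Fin m, r < r' → σ.symm r' < σ.symm r → ∀ q q' : Fin 4,
        Vop C k r (pauli q) * Vop C k r' (pauli q') =
          Vop C k r' (pauli q') * Vop C k r (pauli q))) :=
  stmt16_general n m C C' hC hC' k l σ

end QEC
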